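/- arXiv:math/0002177 — 3 statements merged into one kernel-verified Lean document; each statement's English description precedes it below -/
import Mathlib

section
/- Let R be an associative unital algebra over a field k of characteristic zero, with commutator filtration defined by F_0 R = R and F_{n+1} R = Σ_{p=1}^{n} F_p R · F_{n+1-p} R + Σ_{p=0}^{n} ⟨[F_p R, F_{n-p} R]⟩ (the two-sided ideal generated by those commutators). Then for all m, n ≥ 0: F_m R · F_n R ⊆ F_{m+n} R. -/
open Submodule

variable (k : Type) [Field k] [CharZero k]
variable (R : Type) [Ring R] [Algebra k R]

/-- The two-sided ideal (as a `k`-submodule) generated by a set. -/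
def idealGen (S : Set R) : Submodule k R :=
  Submodule.span k {x | ∃ a s b, s ∈ S ∧ x = a * s * b}

/-- The set of commutators of elements of two submodules. -/
def brIdeal (M N : Submodule k R) : Submodule k R :=
  idealGen k R {x | ∃ m ∈ M, ∃ n ∈ N, x = m * n - n * m}

/-- The commutator filtration of `R`:
`F 0 = R`, `F (n+1) = Σ_{p=1}^n F p * F (n+1-p) + Σ_{p=0}^n ⟨[F p, F (n-p)]⟩`. -/
def commFilt : ℕ → Submodule k R
  | 0 => ⊤
  | n + 1 =>
      ((Finset.Icc 1 n).attach.sum fun p =>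
          commFilt p.1 * commFilt (n + 1 - p.1)) +
      ((Finset.range (n + 1)).attach.sum fun p =>
          brIdeal k R (commFilt p.1) (commFilt (n - p.1)))
  decreasing_by
  · have := Finset.mem_Icc.mp p.2; omega
  · have := Finset.mem_Icc.mp p.2; omega
  · have := Finset.mem_range.mp p.2; omega
  · have := Finset.mem_range.mp p.2; omega

lemma top_mul_idealGen (S : Set R) : (⊤ : Submodule k R) * idealGen k R S ≤ idealGen k R S := by
  rw [Submodule.mul_le]
  intro x _ y hy
  induction hy using Submodule.span_induction with
  | mem z hz =>
    obtain ⟨a, s, b, hs, rfl⟩ := hz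
    exact Submodule.subset_span ⟨x * a, s, b, hs, by simp [mul_assoc]⟩
  | zero => simpa using (idealGen k R S).zero_mem
  | add u v _ _ hu hv => rw [mul_add]; exact (idealGen k R S).add_mem hu hv
  | smul c u _ hu => rw [mul_smul_comm]; exact (idealGen k R S).smul_mem c hu

lemma idealGen_mul_top (S : Set R) : idealGen k R S * (⊤ : Submodule k R) ≤ idealGen k R S := by
  rw [Submodule.mul_le]
  intro y hy x _
  induction hy using Submodule.span_induction with
  | mem z hz =>
    obtain ⟨a, s, b, hs, rfl⟩ := hz
    exact Submodule.subset_span ⟨a, s, b * x, hs, by simp [mul_assoc]⟩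
  | zero => simpa using (idealGen k R S).zero_mem
  | add u v _ _ hu hv => rw [add_mul]; exact (idealGen k R S).add_mem hu hv
  | smul c u _ hu => rw [smul_mul_assoc]; exact (idealGen k R S).smul_mem c hu

lemma commFilt_ideal : ∀ n : ℕ,
    (⊤ : Submodule k R) * commFilt k R n ≤ commFilt k R n ∧
    commFilt k R n * (⊤ : Submodule k R) ≤ commFilt k R n := by
  intro n
  induction n using Nat.strong_induction_on with
  | _ n ih =>
    match n with
    | 0 =>
      have h0 : commFilt k R 0 = ⊤ := by rw [commFilt]
      rw [h0]; exact ⟨le_top, le_top⟩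
    | n + 1 =>
      rw [commFilt]
      constructor
      · rw [mul_add, Finset.mul_sum, Finset.mul_sum]
        refine add_le_add (Finset.sum_le_sum fun p _ => ?_)
          (Finset.sum_le_sum fun p _ => ?_)
        · rw [← mul_assoc]
          exact mul_le_mul'
            ((ih p.1 (by have := Finset.mem_Icc.mp p.2; omega)).1) le_rfl
        · exact top_mul_idealGen k R _
      · rw [add_mul, Finset.sum_mul, Finset.sum_mul]
        refine add_le_add (Finset.sum_le_sum fun p _ => ?_)
          (Finset.sum_le_sum fun p _ => ?_)
        · rw [mul_assoc]
          exact mul_le_mul' le_rfl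
            ((ih (n + 1 - p.1) (by have := Finset.mem_Icc.mp p.2; omega)).2)
        · exact idealGen_mul_top k R _

theorem commFilt_mul_le (m n : ℕ) :
    commFilt k R m * commFilt k R n ≤ commFilt k R (m + n) := by
  match m, n with
  | 0, n =>
    have h0 : commFilt k R 0 = ⊤ := by rw [commFilt]
    rw [h0, Nat.zero_add]; exact (commFilt_ideal k R n).1
  | m + 1, 0 => simpa [commFilt] using (commFilt_ideal k R (m + 1)).2
  | m + 1, n + 1 =>
    have hmn : m + 1 + (n + 1) = (m + n + 1) + 1 := by omega
    rw [hmn]; conv_rhs => rw [commFilt]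
    refine le_trans ?_ (le_add_right (le_refl _))
    have hp : m + 1 ∈ Finset.Icc 1 (m + n + 1) := Finset.mem_Icc.mpr ⟨by omega, by omega⟩
    have := Finset.single_le_sum
      (f := fun p : {x // x ∈ Finset.Icc 1 (m + n + 1)} =>
        commFilt k R p.1 * commFilt k R (m + n + 1 + 1 - p.1))
      (fun i _ => zero_le) (Finset.mem_attach _ ⟨m + 1, hp⟩)
    have e : m + n + 1 + 1 - (m + 1) = n + 1 := by omega
    conv_lhs => rw [← e]
    exact this
end

section
/- Let X be a set and V the free vector space on X. Then the free Lie algebra L V is spanned as a vector space by the set X ∪ ⋃_{n≥1} { [x_1, [x_2, [..., [x_n, x_{n+1}]...]]] : x_i ∈ X }, i.e. by X together with all right-normed iterated brackets of elements of X. -/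
variable (k : Type) [Field k] [CharZero k]
variable (X : Type)

/-- The generator of the tensor algebra on the free vector space `X →₀ k`
corresponding to `x ∈ X`. -/
noncomputable def gen (x : X) : TensorAlgebra k (X →₀ k) :=
  TensorAlgebra.ι k (Finsupp.single x 1)

/-- Right-normed iterated bracket `[x_1,[x_2,[...,[x_n, x_{n+1}]...]]]`
(with bracket `[a,b] = a*b - b*a`), for the list `[x_1,...,x_n]` and last entry `x`.
For the empty list this is just the generator `x`. -/
noncomputable def rightNormed (l : List X) (x : X) : TensorAlgebra k (X →₀ k) :=
  l.foldr (fun a acc => gen k X a * acc - acc * gen k X a) (gen k X x)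

attribute [local instance] LieRing.ofAssociativeRing

lemma rightNormed_nil (x : X) : rightNormed k X [] x = gen k X x := rfl

lemma rightNormed_cons (a : X) (l : List X) (x : X) :
    rightNormed k X (a :: l) x = ⁅gen k X a, rightNormed k X l x⁆ := by
  rw [Ring.lie_def]; rfl

noncomputable def SMod : Submodule k (TensorAlgebra k (X →₀ k)) :=
  Submodule.span k {z | ∃ (l : List X) (x : X), z = rightNormed k X l x}

local notation "S" => SMod k X

lemma gen_lie_mem (a : X) {u : TensorAlgebra k (X →₀ k)} (hu : u ∈ S) :
    ⁅gen k X a, u⁆ ∈ S := by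
  induction hu using Submodule.span_induction with
  | mem z hz =>
    obtain ⟨l, x, rfl⟩ := hz
    exact Submodule.subset_span (⟨a :: l, x, (rightNormed_cons k X a l x).symm⟩ :
      _ ∈ {z | ∃ (l : List X) (x : X), z = rightNormed k X l x})
  | zero => simpa using Submodule.zero_mem _
  | add u v _ _ hu hv => rw [lie_add]; exact Submodule.add_mem _ hu hv
  | smul c u _ hu => rw [lie_smul]; exact Submodule.smul_mem _ _ hu

lemma rightNormed_lie_mem (l : List X) (x : X) :
    ∀ {v : TensorAlgebra k (X →₀ k)}, v ∈ S → ⁅rightNormed k X l x, v⁆ ∈ S := by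
  induction l with
  | nil => intro v hv; rw [rightNormed_nil]; exact gen_lie_mem k X x hv
  | cons a l ih =>
    intro v hv
    rw [rightNormed_cons]
    have : ⁅⁅gen k X a, rightNormed k X l x⁆, v⁆ =
        ⁅gen k X a, ⁅rightNormed k X l x, v⁆⁆ - ⁅rightNormed k X l x, ⁅gen k X a, v⁆⁆ := by
      rw [leibniz_lie]; abel
    rw [this]
    exact Submodule.sub_mem _ (gen_lie_mem k X a (ih hv)) (ih (gen_lie_mem k X a hv))

lemma lie_mem_S {u v : TensorAlgebra k (X →₀ k)} (hu : u ∈ S) (hv : v ∈ S) :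
    ⁅u, v⁆ ∈ S := by
  induction hu using Submodule.span_induction with
  | mem z hz =>
    obtain ⟨l, x, rfl⟩ := hz
    exact rightNormed_lie_mem k X l x hv
  | zero => simpa using Submodule.zero_mem _
  | add u w _ _ hu hw => rw [add_lie]; exact Submodule.add_mem _ hu hw
  | smul c u _ hu => rw [smul_lie]; exact Submodule.smul_mem _ _ hu

noncomputable def SLie : LieSubalgebra k (TensorAlgebra k (X →₀ k)) where
  __ := SMod k X
  lie_mem' := fun hu hv => lie_mem_S k X hu hv

theorem freeLie_spanned_by_rightNormed_brackets' :
    SMod k X =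
      (LieSubalgebra.lieSpan k (TensorAlgebra k (X →₀ k))
        (Set.range (gen k X))).toSubmodule := by
  apply le_antisymm
  · rw [SMod, Submodule.span_le]
    rintro z ⟨l, x, rfl⟩
    induction l with
    | nil =>
      exact LieSubalgebra.subset_lieSpan ⟨x, rfl⟩
    | cons a l ih =>
      rw [rightNormed_cons]
      exact LieSubalgebra.lie_mem _ (LieSubalgebra.subset_lieSpan ⟨a, rfl⟩) ih
  · intro z hz
    have : LieSubalgebra.lieSpan k (TensorAlgebra k (X →₀ k)) (Set.range (gen k X)) ≤
        SLie k X := by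
      apply LieSubalgebra.lieSpan_le.mpr
      rintro w ⟨x, rfl⟩
      exact Submodule.subset_span (⟨[], x, rfl⟩ :
        _ ∈ {z | ∃ (l : List X) (x : X), z = rightNormed k X l x})
    exact this hz

theorem freeLie_spanned_by_rightNormed_brackets :
    Submodule.span k {z | ∃ (l : List X) (x : X), z = rightNormed k X l x} =
      (LieSubalgebra.lieSpan k (TensorAlgebra k (X →₀ k))
        (Set.range (gen k X))).toSubmodule :=
  freeLie_spanned_by_rightNormed_brackets' k X
end

section
/- Let R be an associative unital algebra over a field of characteristic zero with commutator filtration F, and suppose F_{d+1} R = 0. Let f : R → R be an algebra endomorphism such that the induced map on R / F_1 R is the identity. Then f restricted to F_d R is the identity. -/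
open Submodule

variable (k : Type) [Field k] [CharZero k]
variable (R : Type) [Ring R] [Algebra k R]

namespace CFilAux

set_option linter.unusedSectionVars false

variable {k R}

lemma fsum_le {ι : Type*} (s : Finset ι) (g : ι → Submodule k R) (K : Submodule k R)
    (h : ∀ i ∈ s, g i ≤ K) : s.sum g ≤ K := by
  classical
  induction s using Finset.induction_on with
  | empty => simp
  | insert _ _ hnot ih =>
    rw [Finset.sum_insert hnot, Submodule.add_eq_sup]
    exact sup_le (h _ (Finset.mem_insert_self _ _))
      (ih fun i hi => h i (Finset.mem_insert_of_mem hi))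

lemma le_fsum {ι : Type*} (s : Finset ι) (g : ι → Submodule k R) {i : ι} (hi : i ∈ s) :
    g i ≤ s.sum g :=
  Finset.single_le_sum (fun j _ => zero_le) hi

lemma mem_idealGen {S : Set R} {s : R} (hs : s ∈ S) : s ∈ idealGen k R S :=
  Submodule.subset_span ⟨1, s, 1, hs, by simp⟩

lemma idealGen_mul_left {S : Set R} (r : R) {x : R} (hx : x ∈ idealGen k R S) :
    r * x ∈ idealGen k R S := by
  induction hx using Submodule.span_induction with
  | mem y hy =>
      obtain ⟨a, s, b, hs, rfl⟩ := hy
      exact Submodule.subset_span ⟨r * a, s, b, hs, by noncomm_ring⟩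
  | zero => simpa using (idealGen k R S).zero_mem
  | add y z _ _ ihy ihz => rw [mul_add]; exact add_mem ihy ihz
  | smul c y _ ihy => rw [mul_smul_comm]; exact Submodule.smul_mem _ _ ihy

lemma idealGen_mul_right {S : Set R} (r : R) {x : R} (hx : x ∈ idealGen k R S) :
    x * r ∈ idealGen k R S := by
  induction hx using Submodule.span_induction with
  | mem y hy =>
      obtain ⟨a, s, b, hs, rfl⟩ := hy
      exact Submodule.subset_span ⟨a, s, b * r, hs, by noncomm_ring⟩
  | zero => simpa using (idealGen k R S).zero_mem
  | add y z _ _ ihy ihz => rw [add_mul]; exact add_mem ihy ihz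
  | smul c y _ ihy => rw [smul_mul_assoc]; exact Submodule.smul_mem _ _ ihy

lemma mem_brIdeal {M N : Submodule k R} {m n : R} (hm : m ∈ M) (hn : n ∈ N) :
    m * n - n * m ∈ brIdeal k R M N :=
  mem_idealGen ⟨m, hm, n, hn, rfl⟩

lemma brIdeal_mono {M M' N N' : Submodule k R} (hM : M ≤ M') (hN : N ≤ N') :
    brIdeal k R M N ≤ brIdeal k R M' N' := by
  apply Submodule.span_mono
  rintro x ⟨a, s, b, ⟨m, hm, n, hn, rfl⟩, rfl⟩
  exact ⟨a, _, b, ⟨m, hM hm, n, hN hn, rfl⟩, rfl⟩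

lemma sum1_le (n : ℕ) :
    ((Finset.Icc 1 n).attach.sum fun p =>
        commFilt k R p.1 * commFilt k R (n + 1 - p.1)) ≤ commFilt k R (n + 1) := by
  conv_rhs => rw [commFilt]
  exact le_self_add

lemma sum2_le (n : ℕ) :
    ((Finset.range (n + 1)).attach.sum fun p =>
        brIdeal k R (commFilt k R p.1) (commFilt k R (n - p.1))) ≤ commFilt k R (n + 1) := by
  conv_rhs => rw [commFilt]
  exact le_add_self

lemma mul_le_commFilt {p n : ℕ} (hp : p ∈ Finset.Icc 1 n) :
    commFilt k R p * commFilt k R (n + 1 - p) ≤ commFilt k R (n + 1) := by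
  refine le_trans ?_ (sum1_le n)
  have h := le_fsum ((Finset.Icc 1 n).attach)
    (fun q => commFilt k R q.1 * commFilt k R (n + 1 - q.1)) (Finset.mem_attach _ ⟨p, hp⟩)
  simpa using h

lemma brIdeal_le_commFilt {p n : ℕ} (hp : p ∈ Finset.range (n + 1)) :
    brIdeal k R (commFilt k R p) (commFilt k R (n - p)) ≤ commFilt k R (n + 1) := by
  refine le_trans ?_ (sum2_le n)
  have h := le_fsum ((Finset.range (n + 1)).attach)
    (fun q => brIdeal k R (commFilt k R q.1) (commFilt k R (n - q.1)))
    (Finset.mem_attach _ ⟨p, hp⟩)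
  simpa using h

lemma commFilt_mul_left : ∀ n : ℕ, 1 ≤ n → ∀ r x : R, x ∈ commFilt k R n →
    r * x ∈ commFilt k R n := by
  intro n
  induction n using Nat.strong_induction_on with
  | _ n ih =>
  match n, ih with
  | 0, _ => exact fun h => absurd h (by omega)
  | m + 1, ih =>
    intro _ r x hx
    have main : commFilt k R (m + 1) ≤
        Submodule.comap (LinearMap.mulLeft k r) (commFilt k R (m + 1)) := by
      conv_lhs => rw [commFilt]
      rw [Submodule.add_eq_sup]
      apply sup_le
      · apply fsum_le
        intro q _
        have hq := Finset.mem_Icc.mp q.2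
        rw [Submodule.mul_le]
        intro a ha b hb
        have hra : r * a ∈ commFilt k R q.1 := ih q.1 (by omega) hq.1 r a ha
        simp only [Submodule.mem_comap, LinearMap.mulLeft_apply, ← mul_assoc]
        exact mul_le_commFilt q.2 (Submodule.mul_mem_mul hra hb)
      · apply fsum_le
        intro q _
        intro x hx
        simp only [Submodule.mem_comap, LinearMap.mulLeft_apply]
        exact brIdeal_le_commFilt q.2 (idealGen_mul_left r hx)
    exact main hx

lemma commFilt_mul_right : ∀ n : ℕ, 1 ≤ n → ∀ r x : R, x ∈ commFilt k R n →
    x * r ∈ commFilt k R n := by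
  intro n
  induction n using Nat.strong_induction_on with
  | _ n ih =>
  match n, ih with
  | 0, _ => exact fun h => absurd h (by omega)
  | m + 1, ih =>
    intro _ r x hx
    have main : commFilt k R (m + 1) ≤
        Submodule.comap (LinearMap.mulRight k r) (commFilt k R (m + 1)) := by
      conv_lhs => rw [commFilt]
      rw [Submodule.add_eq_sup]
      apply sup_le
      · apply fsum_le
        intro q _
        have hq := Finset.mem_Icc.mp q.2
        rw [Submodule.mul_le]
        intro a ha b hb
        have hbr : b * r ∈ commFilt k R (m + 1 - q.1) :=
          ih (m + 1 - q.1) (by omega) (by omega) r b hb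
        simp only [Submodule.mem_comap, LinearMap.mulRight_apply, mul_assoc]
        exact mul_le_commFilt q.2 (Submodule.mul_mem_mul ha hbr)
      · apply fsum_le
        intro q _
        intro x hx
        simp only [Submodule.mem_comap, LinearMap.mulRight_apply]
        exact brIdeal_le_commFilt q.2 (idealGen_mul_right r hx)
    exact main hx

lemma commFilt_mul_le : ∀ a b : ℕ, commFilt k R a * commFilt k R b ≤ commFilt k R (a + b) := by
  intro a b
  match a, b with
  | 0, 0 =>
      rw [Submodule.mul_le]
      intro m _ n _
      show m * n ∈ commFilt k R 0
      rw [commFilt]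
      exact Submodule.mem_top
  | 0, b + 1 =>
      rw [Nat.zero_add, Submodule.mul_le]
      intro m _ n hn
      exact commFilt_mul_left (b + 1) (by omega) m n hn
  | a + 1, 0 =>
      rw [Submodule.mul_le]
      intro m hm n _
      exact commFilt_mul_right (a + 1) (by omega) n m hm
  | a + 1, b + 1 =>
      have hp : a + 1 ∈ Finset.Icc 1 (a + b + 1) := by
        rw [Finset.mem_Icc]; omega
      have h := mul_le_commFilt (k := k) (R := R) hp
      have e1 : a + b + 1 + 1 - (a + 1) = b + 1 := by omega
      have e2 : a + b + 1 + 1 = (a + 1) + (b + 1) := by omega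
      rw [e1, e2] at h
      exact h

lemma commFilt_br_le (a b : ℕ) :
    brIdeal k R (commFilt k R a) (commFilt k R b) ≤ commFilt k R (a + b + 1) := by
  have hp : a ∈ Finset.range (a + b + 1) := by rw [Finset.mem_range]; omega
  have h := brIdeal_le_commFilt (k := k) (R := R) (n := a + b) hp
  rwa [show a + b - a = b from by omega] at h

lemma commFilt_succ_le : ∀ n : ℕ, commFilt k R (n + 1) ≤ commFilt k R n := by
  intro n
  induction n using Nat.strong_induction_on with
  | _ n ih =>
  match n, ih with
  | 0, _ =>
      conv_rhs => rw [commFilt]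
      exact le_top
  | m + 1, ih =>
    conv_lhs => rw [commFilt]
    rw [Submodule.add_eq_sup]
    apply sup_le
    · apply fsum_le
      intro q _
      have hq := Finset.mem_Icc.mp q.2
      have h1 : commFilt k R (m + 1 + 1 - q.1) ≤ commFilt k R (m + 1 - q.1) := by
        rw [show m + 1 + 1 - q.1 = (m + 1 - q.1) + 1 from by omega]
        exact ih (m + 1 - q.1) (by omega)
      calc commFilt k R q.1 * commFilt k R (m + 1 + 1 - q.1)
          ≤ commFilt k R q.1 * commFilt k R (m + 1 - q.1) :=
            mul_le_mul' le_rfl h1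
        _ ≤ commFilt k R (q.1 + (m + 1 - q.1)) := commFilt_mul_le q.1 (m + 1 - q.1)
        _ = commFilt k R (m + 1) := by rw [show q.1 + (m + 1 - q.1) = m + 1 from by omega]
    · apply fsum_le
      intro q _
      have hq := Finset.mem_range.mp q.2
      by_cases hpm : q.1 ≤ m
      · have h1 : commFilt k R (m + 1 - q.1) ≤ commFilt k R (m - q.1) := by
          rw [show m + 1 - q.1 = (m - q.1) + 1 from by omega]
          exact ih (m - q.1) (by omega)
        calc brIdeal k R (commFilt k R q.1) (commFilt k R (m + 1 - q.1))
            ≤ brIdeal k R (commFilt k R q.1) (commFilt k R (m - q.1)) :=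
              brIdeal_mono le_rfl h1
          _ ≤ commFilt k R (q.1 + (m - q.1) + 1) := commFilt_br_le _ _
          _ = commFilt k R (m + 1) := by
              rw [show q.1 + (m - q.1) + 1 = m + 1 from by omega]
      · have hpe : q.1 = m + 1 := by omega
        have h1 : commFilt k R q.1 ≤ commFilt k R m := by
          rw [hpe]; exact ih m (by omega)
        calc brIdeal k R (commFilt k R q.1) (commFilt k R (m + 1 - q.1))
            ≤ brIdeal k R (commFilt k R m) (commFilt k R 0) := by
              apply brIdeal_mono h1
              rw [show m + 1 - q.1 = 0 from by omega]
          _ ≤ commFilt k R (m + 0 + 1) := commFilt_br_le _ _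
          _ = commFilt k R (m + 1) := by rw [show m + 0 + 1 = m + 1 from by omega]

lemma key (f : R →ₐ[k] R) (hf : ∀ r : R, f r - r ∈ commFilt k R 1) :
    ∀ n : ℕ, ∀ x ∈ commFilt k R n, f x - x ∈ commFilt k R (n + 1) := by
  intro n
  induction n using Nat.strong_induction_on with
  | _ n ih =>
  match n, ih with
  | 0, _ => exact fun x _ => hf x
  | m + 1, ih =>
    intro x hx
    have main : commFilt k R (m + 1) ≤
        Submodule.comap (f.toLinearMap - LinearMap.id) (commFilt k R (m + 2)) := by
      conv_lhs => rw [commFilt]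
      rw [Submodule.add_eq_sup]
      apply sup_le
      · apply fsum_le
        intro q _
        have hq := Finset.mem_Icc.mp q.2
        rw [Submodule.mul_le]
        intro a ha b hb
        have hda : f a - a ∈ commFilt k R (q.1 + 1) := ih q.1 (by omega) a ha
        have hdb : f b - b ∈ commFilt k R (m + 1 - q.1 + 1) :=
          ih (m + 1 - q.1) (by omega) b hb
        simp only [Submodule.mem_comap, LinearMap.sub_apply, AlgHom.toLinearMap_apply,
          LinearMap.id_apply]
        have expand : f (a * b) - a * b =
            ((f a - a) * b + (f a - a) * (f b - b)) + a * (f b - b) := by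
          rw [map_mul]; noncomm_ring
        rw [expand]
        refine add_mem (add_mem ?_ ?_) ?_
        · have h := commFilt_mul_le (k := k) (R := R) (q.1 + 1) (m + 1 - q.1)
            (Submodule.mul_mem_mul hda hb)
          rwa [show (q.1 + 1) + (m + 1 - q.1) = m + 2 from by omega] at h
        · have h := commFilt_mul_le (k := k) (R := R) (q.1 + 1) (m + 1 - q.1 + 1)
            (Submodule.mul_mem_mul hda hdb)
          rw [show (q.1 + 1) + (m + 1 - q.1 + 1) = m + 3 from by omega] at h
          exact commFilt_succ_le (m + 2) h
        · have h := commFilt_mul_le (k := k) (R := R) q.1 (m + 1 - q.1 + 1)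
            (Submodule.mul_mem_mul ha hdb)
          rwa [show q.1 + (m + 1 - q.1 + 1) = m + 2 from by omega] at h
      · apply fsum_le
        intro q _
        have hq := Finset.mem_range.mp q.2
        show idealGen k R _ ≤ _
        rw [idealGen, Submodule.span_le]
        rintro x ⟨a, s, b, ⟨u, hu, v, hv, rfl⟩, rfl⟩
        simp only [SetLike.mem_coe, Submodule.mem_comap, LinearMap.sub_apply,
          AlgHom.toLinearMap_apply, LinearMap.id_apply]
        have hdu : f u - u ∈ commFilt k R (q.1 + 1) := ih q.1 (by omega) u hu
        have hdv : f v - v ∈ commFilt k R (m - q.1 + 1) := ih (m - q.1) (by omega) v hv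
        have hs : u * v - v * u ∈ commFilt k R (m + 1) := by
          have h := commFilt_br_le (k := k) (R := R) q.1 (m - q.1) (mem_brIdeal hu hv)
          rwa [show q.1 + (m - q.1) + 1 = m + 1 from by omega] at h
        have hds : f (u * v - v * u) - (u * v - v * u) ∈ commFilt k R (m + 2) := by
          have e : f (u * v - v * u) - (u * v - v * u) =
              (((f u - u) * v - v * (f u - u)) + (u * (f v - v) - (f v - v) * u)) +
              ((f u - u) * (f v - v) - (f v - v) * (f u - u)) := by
            simp only [map_sub, map_mul]; noncomm_ring
          rw [e]
          refine add_mem (add_mem ?_ ?_) ?_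
          · have h := commFilt_br_le (k := k) (R := R) (q.1 + 1) (m - q.1)
              (mem_brIdeal hdu hv)
            rwa [show (q.1 + 1) + (m - q.1) + 1 = m + 2 from by omega] at h
          · have h := commFilt_br_le (k := k) (R := R) q.1 (m - q.1 + 1)
              (mem_brIdeal hu hdv)
            rwa [show q.1 + (m - q.1 + 1) + 1 = m + 2 from by omega] at h
          · have h := commFilt_br_le (k := k) (R := R) (q.1 + 1) (m - q.1 + 1)
              (mem_brIdeal hdu hdv)
            rw [show (q.1 + 1) + (m - q.1 + 1) + 1 = m + 3 from by omega] at h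
            exact commFilt_succ_le (m + 2) h
        have hfs : f (u * v - v * u) ∈ commFilt k R (m + 1) := by
          have e : f (u * v - v * u) =
              (u * v - v * u) + (f (u * v - v * u) - (u * v - v * u)) := by noncomm_ring
          rw [e]
          exact add_mem hs (commFilt_succ_le (m + 1) hds)
        have key_eq : f (a * (u * v - v * u) * b) - a * (u * v - v * u) * b =
            ((f a - a) * (f (u * v - v * u) * f b) +
              (a * (f (u * v - v * u) - (u * v - v * u))) * f b) +
              (a * (u * v - v * u)) * (f b - b) := by
          simp only [map_mul]; noncomm_ring
        rw [key_eq]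
        refine add_mem (add_mem ?_ ?_) ?_
        · have h1 : f (u * v - v * u) * f b ∈ commFilt k R (m + 1) :=
            commFilt_mul_right (m + 1) (by omega) (f b) _ hfs
          have h := commFilt_mul_le (k := k) (R := R) 1 (m + 1)
            (Submodule.mul_mem_mul (hf a) h1)
          rwa [show 1 + (m + 1) = m + 2 from by omega] at h
        · have h1 : a * (f (u * v - v * u) - (u * v - v * u)) ∈ commFilt k R (m + 2) :=
            commFilt_mul_left (m + 2) (by omega) a _ hds
          exact commFilt_mul_right (m + 2) (by omega) (f b) _ h1
        · have h1 : a * (u * v - v * u) ∈ commFilt k R (m + 1) :=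
            commFilt_mul_left (m + 1) (by omega) a _ hs
          exact commFilt_mul_le (k := k) (R := R) (m + 1) 1
            (Submodule.mul_mem_mul h1 (hf b))
    have h := main hx
    simpa using h

end CFilAux

/-- If `F_{d+1} R = 0` and the algebra endomorphism `f` induces the identity on
`R / F_1 R`, then `f` is the identity on `F_d R`. -/
theorem endo_id_on_Fd (d : ℕ) (hnil : commFilt k R (d + 1) = ⊥)
    (f : R →ₐ[k] R) (hf : ∀ r : R, f r - r ∈ commFilt k R 1) :
    ∀ x ∈ commFilt k R d, f x = x := by
  intro x hx
  have h := CFilAux.key f hf d x hx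
  rw [hnil, Submodule.mem_bot, sub_eq_zero] at h
  exact h
end
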